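/- arXiv:2307.12902 — 12 statements merged into one kernel-verified Lean document; each statement's English description precedes it below -/
import Mathlib

section
/- Let H be an antisymmetric digraph in which every non-loop edge is contained in at most one copy of the reflexive directed 3-cycle C. Let I be a finite set and f : C^I → H a digraph homomorphism. Then there exist a subset J ⊆ I and an injective homomorphism ι : C^J → H whose inverse (on its image) is also a homomorphism, such that f = ι ∘ π_J, where π_J is the restriction map. In particular, the image of f is isomorphic to a finite power of C. -/
/-- Edge relation of the reflexive directed 3-cycle `C` on `ZMod 3`. -/
def Cedge (u v : ZMod 3) : Prop := v = u ∨ v = u + 1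

namespace ImagePowAux

set_option linter.unusedSectionVars false

variable {H : Type} {E : H → H → Prop} {I : Type} [DecidableEq I] {f : (I → ZMod 3) → H}

def eI (i : I) : I → ZMod 3 := fun k => if k = i then 1 else 0

lemma hfE (hf : ∀ u v : I → ZMod 3, (∀ i, Cedge (u i) (v i)) → E (f u) (f v))
    (c v w : I → ZMod 3) (h : ∀ k, w k = v k ∨ w k = v k + 1) :
    E (f (c + v)) (f (c + w)) := by
  apply hf; intro k
  rcases h k with h' | h'
  · exact Or.inl (by simp [Pi.add_apply, h'])
  · exact Or.inr (by simp [Pi.add_apply, h', add_assoc])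

lemma deg3 (hanti : ∀ x y : H, E x y → E y x → x = y)
    (hf : ∀ u v : I → ZMod 3, (∀ i, Cedge (u i) (v i)) → E (f u) (f v))
    (c : I → ZMod 3) (j : I) (h : f c = f (c + eI j)) :
    f (c + eI j) = f (c + eI j + eI j) := by
  apply hanti
  · have := hfE (E := E) hf c (eI j) (eI j + eI j) ?_
    · rwa [← add_assoc] at this
    · intro k
      by_cases hk : k = j <;> simp [eI, hk]
  · have := hfE (E := E) hf c (eI j + eI j) 0 ?_
    · rw [add_zero, ← add_assoc, h] at this; exact this
    · intro k
      by_cases hk : k = j <;> simp [eI, hk] <;> decide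

/-- The key step lemma: nondegeneracy in direction `j` propagates from `a` to `a + eI i`. -/
lemma step (hanti : ∀ x y : H, E x y → E y x → x = y)
    (hunique : ∀ x y z z' : H, x ≠ y → E x y →
      (z ≠ x ∧ z ≠ y ∧ E y z ∧ E z x) → (z' ≠ x ∧ z' ≠ y ∧ E y z' ∧ E z' x) → z = z')
    (hf : ∀ u v : I → ZMod 3, (∀ i, Cedge (u i) (v i)) → E (f u) (f v))
    (j i : I) (a : I → ZMod 3) (h : f a ≠ f (a + eI j)) :
    f (a + eI i) ≠ f (a + eI i + eI j) := by
  by_cases hij : i = j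
  · -- easy case: the triple f a, f (a+e_j), f (a+2e_j) is pairwise distinct
    subst hij
    intro heq
    apply h
    apply hanti
    · have := hfE (E := E) hf a 0 (eI i) (by intro k; by_cases hk : k = i <;> simp [eI, hk])
      rwa [add_zero] at this
    · have := hfE (E := E) hf a (eI i + eI i) 0 ?_
      · rw [add_zero, ← add_assoc, ← heq] at this; exact this
      · intro k; by_cases hk : k = i <;> simp [eI, hk] <;> decide
  · -- main case
    intro heq
    set q : ZMod 3 → ZMod 3 → I → ZMod 3 :=
      fun s t => a + (fun k => s * eI i k + t * eI j k) with hq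
    have hji : ¬ j = i := fun h' => hij h'.symm
    have edge : ∀ s t s' t' : ZMod 3, (s' = s ∨ s' = s + 1) → (t' = t ∨ t' = t + 1) →
        E (f (q s t)) (f (q s' t')) := by
      intro s t s' t' hs ht
      apply hfE (E := E) hf a
      intro k
      by_cases hki : k = i
      · subst hki
        simpa [eI, hij] using hs
      · by_cases hkj : k = j
        · subst hkj
          simpa [eI, hji] using ht
        · simp [eI, hki, hkj]
    have hq00 : q 0 0 = a := by funext k; simp [hq]
    have hqj : ∀ s t, q s t + eI j = q s (t + 1) := by
      intro s t; funext k
      simp only [hq, Pi.add_apply]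
      ring
    have hq10 : q 1 0 = a + eI i := by funext k; simp [hq, Pi.add_apply]
    have hA : a + eI j = q 0 1 := by
      have := hqj 0 0; rwa [hq00, zero_add] at this
    have hB : q 1 0 + eI j = q 1 1 := by
      have := hqj 1 0; rwa [zero_add] at this
    have hC : q 1 1 + eI j = q 1 2 := by
      have := hqj 1 1; rwa [show (1 + 1 : ZMod 3) = 2 by decide] at this
    set x := f (q 0 0) with hx
    set y := f (q 0 1) with hy'
    set z := f (q 0 2) with hz'
    set v := f (q 1 0) with hv'
    set w0 := f (q 2 0) with hw'
    have hxy : x ≠ y := by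
      rw [hx, hy', hq00, ← hA]; exact h
    have hdeg : f (q 1 0) = f (q 1 1) := by
      rw [← hq10] at heq
      rwa [hB] at heq
    have hv1 : f (q 1 1) = v := hdeg.symm
    have hv2 : f (q 1 2) = v := by
      have h2 := deg3 (E := E) hanti hf (q 1 0) j (by rw [hB]; exact hdeg)
      rw [hB, hC] at h2
      exact h2.symm.trans hv1
    have Exy : E x y := edge 0 0 0 1 (Or.inl rfl) (Or.inr (by decide))
    have Eyz : E y z := edge 0 1 0 2 (Or.inl rfl) (Or.inr (by decide))
    have Ezx : E z x := edge 0 2 0 0 (Or.inl rfl) (Or.inr (by decide))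
    have Exv : E x v := edge 0 0 1 0 (Or.inr (by decide)) (Or.inl rfl)
    have Eyv : E y v := by have := edge 0 1 1 1 (Or.inr (by decide)) (Or.inl rfl); rwa [hv1] at this
    have Ezv : E z v := by have := edge 0 2 1 2 (Or.inr (by decide)) (Or.inl rfl); rwa [hv2] at this
    have Evw0 : E v w0 := edge 1 0 2 0 (Or.inr (by decide)) (Or.inl rfl)
    have Ew0x : E w0 x := edge 2 0 0 0 (Or.inr (by decide)) (Or.inl rfl)
    have Ew0y : E w0 y := edge 2 0 0 1 (Or.inr (by decide)) (Or.inr (by decide))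
    have hyz : y ≠ z := fun hyzeq => hxy (hanti x y Exy (hyzeq ▸ Ezx))
    have hvx : v ≠ x := fun hveq => hxy (hanti x y Exy (by rw [← hveq]; exact Eyv))
    have hvy : v ≠ y := fun hveq => hyz (hanti y z Eyz (by rw [← hveq]; exact Ezv))
    have hw0x : w0 ≠ x := fun h0 => hvx ((hanti x v Exv (by rw [← h0]; exact Evw0)).symm)
    have hw0v : w0 ≠ v := fun h0 => hvx ((hanti x v Exv (by rw [← h0]; exact Ew0x)).symm)
    have hw0y : w0 ≠ y := fun h0 => hxy (hanti x y Exy (by rw [← h0]; exact Ew0x))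
    exact hxy (hunique v w0 x y hw0v.symm Evw0
      ⟨hvx.symm, hw0x.symm, Ew0x, Exv⟩ ⟨hvy.symm, hw0y.symm, Ew0y, Eyv⟩)

/-- Propagate a property closed under single steps from `a` to any `b`. -/
lemma crawl [Fintype I] (N : (I → ZMod 3) → Prop) (a b : I → ZMod 3)
    (hstep : ∀ c i, a i ≠ b i → N c → N (c + eI i)) (ha : N a) : N b := by
  have stepn : ∀ (i : I), a i ≠ b i → ∀ (n : ℕ) (c : I → ZMod 3), N c → N (c + n • eI i) := by
    intro i hi n
    induction n with
    | zero => intro c hc; simpa using hc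
    | succ m ih =>
        intro c hc
        have := hstep _ i hi (ih c hc)
        rwa [succ_nsmul, ← add_assoc]
  have key : ∀ s : Finset I, N (a + ∑ i ∈ s, ((b i - a i).val) • eI i) := by
    intro s
    induction s using Finset.induction_on with
    | empty => simpa using ha
    | @insert i s his ih =>
        rw [Finset.sum_insert his]
        have hrw : a + (((b i - a i).val) • eI i + ∑ x ∈ s, ((b x - a x).val) • eI x)
            = (a + ∑ x ∈ s, ((b x - a x).val) • eI x) + ((b i - a i).val) • eI i := by
          abel
        rw [hrw]
        by_cases hib : a i = b i
        · have h0 : b i - a i = 0 := by rw [hib, sub_self]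
          rw [h0]
          simpa using ih
        · exact stepn i hib _ _ ih
  have hsum : a + ∑ i ∈ Finset.univ, ((b i - a i).val) • eI i = b := by
    funext k
    rw [Pi.add_apply, Finset.sum_apply]
    have hval : ∀ t : ZMod 3, ((t.val : ℕ) : ZMod 3) = t := by decide
    have hterm : ∀ i : I, (((b i - a i).val) • eI i) k = if k = i then b i - a i else 0 := by
      intro i
      by_cases hk : k = i <;> simp [Pi.smul_apply, eI, hk, nsmul_eq_mul, hval]
    rw [Finset.sum_congr rfl (fun i _ => hterm i), Finset.sum_ite_eq]
    simp
  rw [← hsum]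
  exact key Finset.univ

def bump (d : I → ZMod 3) : I → ZMod 3 := fun k => if d k = 0 then 0 else 2
def half (d : I → ZMod 3) : I → ZMod 3 := fun k => if d k = 0 then 0 else 1

lemma three_cases : ∀ t : ZMod 3, t = 0 ∨ t = 1 ∨ t = 2 := by decide

/-- Injectivity on `J`-supported displacements. -/
lemma inj_aux (hanti : ∀ x y : H, E x y → E y x → x = y)
    (hf : ∀ u v : I → ZMod 3, (∀ i, Cedge (u i) (v i)) → E (f u) (f v))
    (a d : I → ZMod 3)
    (hd : ∀ k, d k ≠ 0 → ∀ c, f c ≠ f (c + eI k))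
    (heq : f (a + d) = f a) : d = 0 := by
  by_contra hne
  obtain ⟨j, hj⟩ := Function.ne_iff.mp hne
  rw [Pi.zero_apply] at hj
  have e1 : E (f (a + d)) (f (a + bump d)) := by
    apply hfE (E := E) hf a
    intro k
    rcases three_cases (d k) with h' | h' | h' <;> simp [bump, h'] <;> decide
  have e2 : E (f (a + bump d)) (f a) := by
    have := hfE (E := E) hf a (bump d) 0 ?_
    · rwa [add_zero] at this
    · intro k
      rcases three_cases (d k) with h' | h' | h' <;> simp [bump, h'] <;> decide
  rw [heq] at e1
  have heq2 : f a = f (a + bump d) := hanti _ _ e1 e2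
  have e3 : E (f (a + bump d)) (f (a + (bump d + eI j))) := by
    apply hfE (E := E) hf a
    intro k
    by_cases hk : k = j <;> simp [eI, hk]
  have e4 : E (f (a + (bump d + eI j))) (f a) := by
    have := hfE (E := E) hf a (bump d + eI j) 0 ?_
    · rwa [add_zero] at this
    · intro k
      by_cases hk : k = j
      · subst hk
        simp [eI, bump, hj]
        decide
      · rcases three_cases (d k) with h' | h' | h' <;> simp [eI, bump, hk, h'] <;> decide
  rw [heq2] at e4
  have heq3 : f (a + bump d) = f (a + (bump d + eI j)) := hanti _ _ e3 e4
  exact hd j hj (a + bump d) (by rwa [← add_assoc] at heq3)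

/-- Edge reflection: an `E`-edge in the image forces coordinatewise `Cedge` on `J`-coordinates. -/
lemma back_aux (hanti : ∀ x y : H, E x y → E y x → x = y)
    (hunique : ∀ x y z z' : H, x ≠ y → E x y →
      (z ≠ x ∧ z ≠ y ∧ E y z ∧ E z x) → (z' ≠ x ∧ z' ≠ y ∧ E y z' ∧ E z' x) → z = z')
    (hf : ∀ u v : I → ZMod 3, (∀ i, Cedge (u i) (v i)) → E (f u) (f v))
    (a d : I → ZMod 3) (j : I)
    (hd : ∀ k, d k ≠ 0 → ∀ c, f c ≠ f (c + eI k)) (hdj : d j = 2)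
    (hE : E (f a) (f (a + d))) : False := by
  have hj0 : d j ≠ 0 := by rw [hdj]; decide
  have hbj : bump d j = 2 := if_neg hj0
  have hhj : half d j = 1 := if_neg hj0
  have inj2 : ∀ p q : I → ZMod 3, (∀ k, d k = 0 → p k = q k) → f (a + p) = f (a + q) → p = q := by
    intro p q hsupp heq
    have hsub : ∀ k, (p - q) k ≠ 0 → ∀ c, f c ≠ f (c + eI k) := by
      intro k hk
      apply hd k
      intro h0
      apply hk
      rw [Pi.sub_apply, hsupp k h0, sub_self]
    have harg : (a + q) + (p - q) = a + p := by abel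
    have := inj_aux (E := E) hanti hf (a + q) (p - q) hsub (by rw [harg]; exact heq)
    exact sub_eq_zero.mp this
  by_cases hone : ∃ k, d k = 1
  · obtain ⟨k₀, hk₀⟩ := hone
    have hbk₀ : bump d k₀ = 2 := by simp only [bump, hk₀]; decide
    have e1 : E (f (a + d)) (f (a + bump d)) :=
      hfE (E := E) hf a d (bump d) (fun k =>
        (show ∀ t : ZMod 3, (if t = 0 then (0:ZMod 3) else 2) = t ∨
            (if t = 0 then (0:ZMod 3) else 2) = t + 1 by decide) (d k))
    have e2 : E (f (a + bump d)) (f (a + 0)) :=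
      hfE (E := E) hf a (bump d) 0 (fun k =>
        (show ∀ t : ZMod 3, (0:ZMod 3) = (if t = 0 then (0:ZMod 3) else 2) ∨
            (0:ZMod 3) = (if t = 0 then (0:ZMod 3) else 2) + 1 by decide) (d k))
    have e3 : E (f (a + 0)) (f (a + half d)) :=
      hfE (E := E) hf a 0 (half d) (fun k =>
        (show ∀ t : ZMod 3, (if t = 0 then (0:ZMod 3) else 1) = 0 ∨
            (if t = 0 then (0:ZMod 3) else 1) = 0 + 1 by decide) (d k))
    have e4 : E (f (a + half d)) (f (a + bump d)) :=
      hfE (E := E) hf a (half d) (bump d) (fun k =>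
        (show ∀ t : ZMod 3, (if t = 0 then (0:ZMod 3) else 2) = (if t = 0 then (0:ZMod 3) else 1) ∨
            (if t = 0 then (0:ZMod 3) else 2) = (if t = 0 then (0:ZMod 3) else 1) + 1 by decide) (d k))
    have ha0 : a + (0 : I → ZMod 3) = a := add_zero a
    rw [ha0] at e2 e3
    have hzx : f (a + bump d) ≠ f a := by
      intro h'
      have h2 := congrFun (inj2 (bump d) 0 (fun k hk => by simp [bump, hk])
        (by rw [ha0]; exact h')) j
      rw [Pi.zero_apply, hbj] at h2
      exact absurd h2 (by decide)
    have hyx : f (a + d) ≠ f a := by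
      intro h'
      have h2 := congrFun (inj2 d 0 (fun k hk => by simp [hk]) (by rw [ha0]; exact h')) j
      rw [Pi.zero_apply, hdj] at h2
      exact absurd h2 (by decide)
    have hyz : f (a + d) ≠ f (a + bump d) := by
      intro h'
      have h2 := congrFun (inj2 d (bump d) (fun k hk => by simp [bump, hk]) h') k₀
      rw [hk₀, hbk₀] at h2
      exact absurd h2 (by decide)
    have hwz : f (a + half d) ≠ f (a + bump d) := by
      intro h'
      have h2 := congrFun (inj2 (half d) (bump d) (fun k hk => by simp [half, bump, hk]) h') j
      rw [hhj, hbj] at h2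
      exact absurd h2 (by decide)
    have hwx : f (a + half d) ≠ f a := by
      intro h'
      have h2 := congrFun (inj2 (half d) 0 (fun k hk => by simp [half, hk])
        (by rw [ha0]; exact h')) j
      rw [Pi.zero_apply, hhj] at h2
      exact absurd h2 (by decide)
    have hfin := hunique (f (a + bump d)) (f a) (f (a + d)) (f (a + half d)) hzx e2
      ⟨hyz, hyx, hE, e1⟩ ⟨hwz, hwx, e3, e4⟩
    have h2 := congrFun (inj2 d (half d) (fun k hk => by simp [half, hk]) hfin) j
    rw [hdj, hhj] at h2
    exact absurd h2 (by decide)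
  · push_neg at hone
    have eA : E (f (a + d)) (f (a + 0)) := by
      apply hfE (E := E) hf a
      intro k
      rcases three_cases (d k) with h' | h' | h'
      · exact Or.inl h'.symm
      · exact absurd h' (hone k)
      · exact Or.inr (by rw [Pi.zero_apply, h']; decide)
    rw [add_zero] at eA
    have heq' := hanti _ _ hE eA
    have h2 := congrFun (inj2 d 0 (fun k hk => by simp [hk])
      (by rw [add_zero]; exact heq'.symm)) j
    rw [hdj, Pi.zero_apply] at h2
    exact absurd h2 (by decide)

end ImagePowAux


open ImagePowAux

/-- Homomorphic images of finite powers of `C` in an antisymmetric digraph where every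
non-loop edge lies in at most one copy of `C` are again powers of `C`: every homomorphism
`f : C^I → H` factors as an isomorphism-onto-its-image `ι : C^J → H` composed with the
projection `π_J`. -/
theorem image_of_powers
    (H : Type) (E : H → H → Prop)
    (hanti : ∀ x y : H, E x y → E y x → x = y)
    (hunique : ∀ x y z z' : H, x ≠ y → E x y →
      (z ≠ x ∧ z ≠ y ∧ E y z ∧ E z x) → (z' ≠ x ∧ z' ≠ y ∧ E y z' ∧ E z' x) → z = z')
    (I : Type) [Fintype I]
    (f : (I → ZMod 3) → H)
    (hf : ∀ u v : I → ZMod 3, (∀ i, Cedge (u i) (v i)) → E (f u) (f v)) :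
    ∃ (J : Set I) (ι : (J → ZMod 3) → H),
      Function.Injective ι ∧
      (∀ u v : J → ZMod 3, (∀ j, Cedge (u j) (v j)) ↔ E (ι u) (ι v)) ∧
      (∀ a : I → ZMod 3, f a = ι (fun j => a j)) := by
  letI : DecidableEq I := Classical.decEq I
  classical
  set J : Set I := {j | ∃ a, f a ≠ f (a + eI j)} with hJdef
  have hJ1 : ∀ j ∈ J, ∀ c, f c ≠ f (c + eI j) := by
    intro j hj c
    rw [hJdef, Set.mem_setOf_eq] at hj
    obtain ⟨a, ha⟩ := hj
    exact crawl (N := fun c' => f c' ≠ f (c' + eI j)) a c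
      (fun c' i _ hc => step hanti hunique hf j i c' hc) ha
  have hJ0 : ∀ i, i ∉ J → ∀ c, f (c + eI i) = f c := by
    intro i hi c
    rw [hJdef, Set.mem_setOf_eq] at hi
    push_neg at hi
    exact (hi c).symm
  have hfactor : ∀ a b : I → ZMod 3, (∀ k, k ∈ J → a k = b k) → f b = f a := by
    intro a b hab
    exact crawl (N := fun c => f c = f a) a b
      (fun c i hi hc => by show f (c + eI i) = f a; rw [hJ0 i (fun hiJ => hi (hab i hiJ)) c]; exact hc) rfl
  have hinj : ∀ p q : I → ZMod 3, (∀ k, k ∉ J → p k = q k) → f p = f q → p = q := by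
    intro p q hpq heq
    have hd : ∀ k, (q - p) k ≠ 0 → ∀ c, f c ≠ f (c + eI k) := by
      intro k hk
      apply hJ1 k
      by_contra hkJ
      exact hk (by rw [Pi.sub_apply, hpq k hkJ, sub_self])
    have h0 := inj_aux (E := E) hanti hf p (q - p) hd
      (by rw [show p + (q - p) = q by abel]; exact heq.symm)
    have h1 := sub_eq_zero.mp h0
    exact h1.symm
  refine ⟨J, fun x => f (fun i => if h : i ∈ J then x ⟨i, h⟩ else 0), ?_, ?_, ?_⟩
  · -- injectivity
    intro x y hxy
    have hext := hinj _ _ (fun k hk => by simp [dif_neg hk]) hxy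
    funext j
    have := congrFun hext j.1
    simpa [dif_pos j.2] using this
  · -- edge iff
    intro u v
    constructor
    · intro h
      apply hf
      intro i
      by_cases hi : i ∈ J
      · simpa [dif_pos hi] using h ⟨i, hi⟩
      · simp [dif_neg hi, Cedge]
    · intro hEuv j
      by_contra hnc
      set p : I → ZMod 3 := fun i => if h : i ∈ J then u ⟨i, h⟩ else 0 with hp
      set q : I → ZMod 3 := fun i => if h : i ∈ J then v ⟨i, h⟩ else 0 with hq'
      have hnc' : ¬ (v j = u j ∨ v j = u j + 1) := hnc
      have h2 : ∀ s t : ZMod 3, ¬ (t = s ∨ t = s + 1) → t - s = 2 := by decide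
      have hdj : (q - p) j.1 = 2 := by
        have h3 := h2 (u j) (v j) hnc'
        have hpj : p j.1 = u j := by simp [hp, dif_pos j.2]
        have hqj : q j.1 = v j := by simp [hq', dif_pos j.2]
        rw [Pi.sub_apply, hpj, hqj]
        exact h3
      have hsupp : ∀ k, (q - p) k ≠ 0 → ∀ c, f c ≠ f (c + eI k) := by
        intro k hk
        apply hJ1 k
        by_contra hkJ
        exact hk (by simp [hp, hq', dif_neg hkJ])
      exact back_aux hanti hunique hf p (q - p) j.1 hsupp hdj
        (by rw [show p + (q - p) = q by abel]; exact hEuv)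
  · intro a
    refine (hfactor a _ ?_).symm
    intro k hk
    simp [dif_pos hk]
end

section
/- Every homomorphism f : C^n → C (for finite n ≥ 1) is either a constant map or of the form f(x) = α(x_i) for some coordinate i and some automorphism α of C. Consequently, the polymorphism clone of C consists exactly of the constant operations and the operations that are a projection composed with an automorphism of C. -/
instance (u v : ZMod 3) : Decidable (Cedge u v) := by unfold Cedge; infer_instance

lemma unaryClass (g : ZMod 3 → ZMod 3) (h : ∀ a b, Cedge a b → Cedge (g a) (g b)) :
    (∃ c, ∀ a, g a = c) ∨ (∃ c, ∀ a, g a = a + c) := by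
  revert h; revert g; decide

lemma notAllEdgeTo (c k : ZMod 3) : ¬ ∀ t, Cedge (t + c) k := by revert c k; decide
lemma notAllEdgeFrom (c k : ZMod 3) : ¬ ∀ t, Cedge k (t + c) := by revert c k; decide
lemma edgeShift (c d : ZMod 3) (h1 : ∀ t, Cedge (t + c) (t + d))
    (h2 : ∀ t, Cedge (t + c) (t + 1 + d)) : d = c := by revert h1 h2; revert c d; decide
lemma three (a b : ZMod 3) : b = a ∨ b = a + 1 ∨ b = a + 1 + 1 := by revert a b; decide

lemma cedge_refl (a : ZMod 3) : Cedge a a := Or.inl rfl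
lemma cedge_succ (a : ZMod 3) : Cedge a (a + 1) := Or.inr rfl

lemma snoc_edge {n : ℕ} (u v : Fin n → ZMod 3) (a b : ZMod 3)
    (h : ∀ i, Cedge (u i) (v i)) (hab : Cedge a b) :
    ∀ i : Fin (n + 1), Cedge ((Fin.snoc u a : Fin (n + 1) → ZMod 3) i)
      ((Fin.snoc v b : Fin (n + 1) → ZMod 3) i) := by
  intro i
  cases i using Fin.lastCases with
  | last => simpa using hab
  | cast j => simpa using h j

lemma key : ∀ n, 1 ≤ n → ∀ f : (Fin n → ZMod 3) → ZMod 3,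
    (∀ u v, (∀ i, Cedge (u i) (v i)) → Cedge (f u) (f v)) →
    (∃ c, ∀ x, f x = c) ∨ ∃ (i : Fin n) (c : ZMod 3), ∀ x, f x = x i + c := by
  intro n hn
  induction n, hn using Nat.le_induction with
  | base =>
    intro f hf
    have hx : ∀ x : Fin 1 → ZMod 3, x = fun _ => x 0 := by
      intro x; funext i; rw [Subsingleton.elim i 0]
    have hu : ∀ a b, Cedge a b → Cedge (f (fun _ => a)) (f (fun _ => b)) := by
      intro a b hab
      exact hf _ _ (fun _ => hab)
    rcases unaryClass (fun a => f (fun _ => a)) hu with ⟨c, hc⟩ | ⟨c, hc⟩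
    · left; exact ⟨c, fun x => by rw [hx x]; exact hc (x 0)⟩
    · right; exact ⟨0, c, fun x => by conv_lhs => rw [hx x]; exact hc (x 0)⟩
  | succ n hn ih =>
    intro f hf
    have hG : ∀ a : ZMod 3, ∀ u v, (∀ i, Cedge (u i) (v i)) →
        Cedge (f (Fin.snoc u a)) (f (Fin.snoc v a)) := by
      intro a u v h
      exact hf _ _ (snoc_edge u v a a h (cedge_refl a))
    by_cases hcase : ∃ (a : ZMod 3) (i : Fin n) (c : ZMod 3), ∀ y, f (Fin.snoc y a) = y i + c
    · obtain ⟨a₀, i, c, hP0⟩ := hcase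
      -- propagate to all layers
      have step : ∀ a : ZMod 3, (∀ y, f (Fin.snoc y a) = y i + c) →
          ∀ y, f (Fin.snoc y (a + 1)) = y i + c := by
        intro a hPa
        rcases ih (fun y => f (Fin.snoc y (a + 1))) (hG (a + 1)) with ⟨k, hk⟩ | ⟨j, d, hjd⟩
        · exfalso
          apply notAllEdgeTo c k
          intro t
          have := hf (Fin.snoc (fun _ => t) a) (Fin.snoc (fun _ => t) (a + 1))
            (snoc_edge _ _ _ _ (fun _ => cedge_refl t) (cedge_succ a))
          rwa [hPa, hk] at this
        · have hji : j = i := by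
            by_contra hne
            apply notAllEdgeFrom d (0 + c)
            intro t
            have := hf (Fin.snoc (fun m => if m = j then t else 0) a)
              (Fin.snoc (fun m => if m = j then t else 0) (a + 1))
              (snoc_edge _ _ _ _ (fun _ => cedge_refl _) (cedge_succ a))
            rw [hPa, hjd] at this
            simpa [Ne.symm hne] using this
          subst hji
          have h1 : ∀ t, Cedge (t + c) (t + d) := by
            intro t
            have := hf (Fin.snoc (fun _ => t) a) (Fin.snoc (fun _ => t) (a + 1))
              (snoc_edge _ _ _ _ (fun _ => cedge_refl t) (cedge_succ a))
            rwa [hPa, hjd] at this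
          have h2 : ∀ t, Cedge (t + c) (t + 1 + d) := by
            intro t
            have := hf (Fin.snoc (fun _ => t) a) (Fin.snoc (fun _ => t + 1) (a + 1))
              (snoc_edge _ _ _ _ (fun _ => cedge_succ t) (cedge_succ a))
            rwa [hPa, hjd] at this
          rw [edgeShift c d h1 h2] at hjd
          exact hjd
      have hall : ∀ b : ZMod 3, ∀ y, f (Fin.snoc y b) = y i + c := by
        intro b
        rcases three a₀ b with rfl | rfl | rfl
        · exact hP0
        · exact step a₀ hP0
        · exact step _ (step a₀ hP0)
      right
      refine ⟨i.castSucc, c, fun x => ?_⟩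
      have := hall (x (Fin.last n)) (Fin.init x)
      rwa [Fin.snoc_init_self] at this
    · push_neg at hcase
      have hconst : ∀ a : ZMod 3, ∃ k, ∀ y, f (Fin.snoc y a) = k := by
        intro a
        rcases ih (fun y => f (Fin.snoc y a)) (hG a) with h | ⟨j, d, hjd⟩
        · exact h
        · obtain ⟨y, hy⟩ := hcase a j d
          exact absurd (hjd y) hy
      choose k hk using hconst
      have hku : ∀ a b, Cedge a b → Cedge (k a) (k b) := by
        intro a b hab
        have := hf (Fin.snoc (fun _ => 0) a) (Fin.snoc (fun _ => 0) b)
          (snoc_edge _ _ _ _ (fun _ => cedge_refl 0) hab)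
        rwa [hk, hk] at this
      have hfx : ∀ x, f x = k (x (Fin.last n)) := by
        intro x
        have := hk (x (Fin.last n)) (Fin.init x)
        rwa [Fin.snoc_init_self] at this
      rcases unaryClass k hku with ⟨c, hc⟩ | ⟨c, hc⟩
      · left; exact ⟨c, fun x => by rw [hfx x, hc]⟩
      · right; exact ⟨Fin.last n, c, fun x => by rw [hfx x, hc]⟩

/-- The polymorphisms of `C` are exactly the constant operations and the operations of the
form `x ↦ α(x_i)` for a coordinate `i` and an automorphism `α : x ↦ x + c` of `C`. -/
theorem pol_C (n : ℕ) (hn : 1 ≤ n) (f : (Fin n → ZMod 3) → ZMod 3) :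
    (∀ u v : Fin n → ZMod 3, (∀ i, Cedge (u i) (v i)) → Cedge (f u) (f v)) ↔
      ((∃ c, ∀ x, f x = c) ∨ ∃ (i : Fin n) (c : ZMod 3), ∀ x, f x = x i + c) := by
  constructor
  · exact key n hn f
  · rintro (⟨c, hc⟩ | ⟨i, c, hc⟩) u v h
    · rw [hc, hc]; exact cedge_refl c
    · rw [hc, hc]
      rcases h i with h' | h'
      · left; rw [h']
      · right; rw [h']; ring
end

section
/- Let I be an arbitrary set and f : C^I → C a non-constant digraph homomorphism. Then there exist an ultrafilter U on I and an automorphism α of C such that for all a : I → Z/3Z, f(a) = α(a_U), where a_U is the unique element c ∈ Z/3Z with a⁻¹(c) ∈ U. -/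
def IsHomJ (J : Type) (h : (J → ZMod 3) → ZMod 3) : Prop :=
  ∀ u v : J → ZMod 3, (∀ j, Cedge (u j) (v j)) → Cedge (h u) (h v)

def Classif (J : Type) (h : (J → ZMod 3) → ZMod 3) : Prop :=
  (∃ d, ∀ x, h x = d) ∨ (∃ j c, ∀ x, h x = x j + c)

lemma fact1 : ∀ d : ZMod 3 → ZMod 3, (∀ y, Cedge (d y) (d (y + 1))) →
    (∀ y, d y = d 0) ∨ (∀ y, d y = y + d 0) := by decide

lemma fact2 : ∀ d c : ZMod 3, (∀ b : ZMod 3, Cedge d (b + c)) → False := by decide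

lemma fact3 : ∀ d c : ZMod 3, (∀ b : ZMod 3, Cedge (b + c) d) → False := by decide

lemma fact4 : ∀ c e : ZMod 3, (∀ b : ZMod 3, Cedge (b + c) (b + e)) →
    (∀ b : ZMod 3, Cedge (b + c) (b + 1 + e)) → e = c := by decide

lemma zcases : ∀ y : ZMod 3, y = 0 ∨ y = 1 ∨ y = 2 := by decide

lemma classify (J : Type) [Finite J] : ∀ h, IsHomJ J h → Classif J h := by
  refine Finite.induction_empty_option (P := fun J => ∀ h, IsHomJ J h → Classif J h)
    ?_ ?_ ?_ J
  · intro α β e ih h hh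
    have hh' : IsHomJ α (fun x => h (x ∘ e.symm)) := by
      intro u v huv
      exact hh _ _ (fun j => huv (e.symm j))
    have key : ∀ x : β → ZMod 3, ((x ∘ e) ∘ e.symm) = x := by
      intro x; funext b; simp
    rcases ih _ hh' with ⟨d, hd⟩ | ⟨j, c, hjc⟩
    · refine Or.inl ⟨d, fun x => ?_⟩
      have h2 : h ((x ∘ e) ∘ e.symm) = d := hd (x ∘ e)
      rwa [key x] at h2
    · refine Or.inr ⟨e j, c, fun x => ?_⟩
      have h2 : h ((x ∘ e) ∘ e.symm) = x (e j) + c := hjc (x ∘ e)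
      rwa [key x] at h2
  · intro h _
    exact Or.inl ⟨h (fun j => j.elim), fun x => congrArg h (funext fun j => j.elim)⟩
  · intro α _ ih h hh
    classical
    set s : ZMod 3 → (α → ZMod 3) → ZMod 3 :=
      fun y x => h (fun o => o.elim y x) with hs
    have shom : ∀ y, IsHomJ α (s y) := by
      intro y u v huv
      exact hh _ _ (fun o => by cases o with
        | none => exact Or.inl rfl
        | some a => exact huv a)
    have adj : ∀ (y : ZMod 3) (u v : α → ZMod 3), (∀ j, Cedge (u j) (v j)) →
        Cedge (s y u) (s (y + 1) v) := by
      intro y u v huv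
      exact hh _ _ (fun o => by cases o with
        | none => exact Or.inr rfl
        | some a => exact huv a)
    have hrec : ∀ y, Classif α (s y) := fun y => ih (s y) (shom y)
    have refl_edge : ∀ u : α → ZMod 3, ∀ j, Cedge (u j) (u j) := fun _ _ => Or.inl rfl
    have hdecomp : ∀ x : Option α → ZMod 3, h x = s (x none) (fun a => x (some a)) := by
      intro x
      apply congrArg h
      funext o; cases o <;> rfl
    -- pairwise structure lemmas
    have constNext : ∀ (y : ZMod 3) (d : ZMod 3), (∀ x, s y x = d) →
        ∀ (j : α) (c : ZMod 3), (∀ x, s (y + 1) x = x j + c) → False := by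
      intro y d hd j c hjc
      refine fact2 d c (fun b => ?_)
      have := adj y (fun _ => b) (fun _ => b) (refl_edge _)
      rwa [hd, hjc] at this
    have projNext : ∀ (y : ZMod 3) (j : α) (c : ZMod 3), (∀ x, s y x = x j + c) →
        ∀ (d : ZMod 3), (∀ x, s (y + 1) x = d) → False := by
      intro y j c hjc d hd
      refine fact3 d c (fun b => ?_)
      have := adj y (fun _ => b) (fun _ => b) (refl_edge _)
      rwa [hd, hjc] at this
    have projProj : ∀ (y : ZMod 3) (i : α) (c : ZMod 3), (∀ x, s y x = x i + c) →
        ∀ (j : α) (e : ZMod 3), (∀ x, s (y + 1) x = x j + e) → i = j ∧ e = c := by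
      intro y i c hic j e hje
      by_cases hij : i = j
      · subst hij
        refine ⟨rfl, fact4 c e (fun b => ?_) (fun b => ?_)⟩
        · have := adj y (fun _ => b) (fun _ => b) (refl_edge _)
          rwa [hic, hje] at this
        · have := adj y (fun _ => b) (fun _ => b + 1) (fun _ => Or.inr rfl)
          rwa [hic, hje] at this
      · exfalso
        apply fact3 ((1:ZMod 3) + e) c
        intro b
        have hedge : ∀ k, Cedge ((Function.update (fun _ => (0:ZMod 3)) i b) k)
            ((Function.update (fun _ => (1:ZMod 3)) i (b + 1)) k) := by
          intro k
          by_cases hk : k = i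
          · subst hk
            rw [Function.update_self, Function.update_self]
            exact Or.inr rfl
          · rw [Function.update_of_ne hk, Function.update_of_ne hk]
            exact Or.inr (by decide)
        have := adj y _ _ hedge
        rw [hic, hje, Function.update_self, Function.update_of_ne (Ne.symm hij)] at this
        exact this
    rcases hrec 0 with ⟨d0, hd0⟩ | ⟨j0, c0, hj0⟩
    · -- all slices constant
      have h1 : ∃ d, ∀ x, s 1 x = d := by
        rcases hrec 1 with h | ⟨j, c, hjc⟩
        · exact h
        · exact absurd (constNext 0 d0 hd0 j c (by simpa using hjc)) (fun h => h)
      rcases h1 with ⟨d1, hd1⟩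
      have h2 : ∃ d, ∀ x, s 2 x = d := by
        rcases hrec 2 with h | ⟨j, c, hjc⟩
        · exact h
        · exact absurd (constNext 1 d1 hd1 j c (by norm_num at hjc ⊢; exact hjc)) (fun h => h)
      rcases h2 with ⟨d2, hd2⟩
      set D : ZMod 3 → ZMod 3 := fun y => s y (fun _ => 0) with hD
      have hDall : ∀ y x, s y x = D y := by
        intro y x
        rcases zcases y with rfl | rfl | rfl
        · rw [hd0]; exact (hd0 _).symm
        · rw [hd1]; exact (hd1 _).symm
        · rw [hd2]; exact (hd2 _).symm
      have cyc : ∀ y, Cedge (D y) (D (y + 1)) := by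
        intro y
        have := adj y (fun _ => 0) (fun _ => 0) (refl_edge _)
        rwa [hDall, hDall] at this
      rcases fact1 D cyc with hconst | hinc
      · refine Or.inl ⟨D 0, fun x => ?_⟩
        rw [hdecomp, hDall, hconst]
      · refine Or.inr ⟨none, D 0, fun x => ?_⟩
        rw [hdecomp, hDall, hinc]
    · -- all slices projections
      have h1 : ∃ j c, ∀ x, s 1 x = x j + c := by
        rcases hrec 1 with ⟨d, hd⟩ | h
        · exact absurd (projNext 0 j0 c0 hj0 d (by simpa using hd)) (fun h => h)
        · exact h
      rcases h1 with ⟨j1, c1, hj1⟩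
      have h2 : ∃ j c, ∀ x, s 2 x = x j + c := by
        rcases hrec 2 with ⟨d, hd⟩ | h
        · exact absurd (projNext 1 j1 c1 hj1 d (by norm_num at hd ⊢; exact hd)) (fun h => h)
        · exact h
      rcases h2 with ⟨j2, c2, hj2⟩
      obtain ⟨e01, e01c⟩ := projProj 0 j0 c0 hj0 j1 c1 (by simpa using hj1)
      obtain ⟨e12, e12c⟩ := projProj 1 j1 c1 hj1 j2 c2 (by norm_num at hj2 ⊢; exact hj2)
      have hall : ∀ y x, s y x = x j0 + c0 := by
        intro y x
        rcases zcases y with rfl | rfl | rfl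
        · exact hj0 x
        · rw [hj1, e01, e01c]
        · rw [hj2, ← e12, ← e01, e12c, e01c]
      exact Or.inr ⟨some j0, c0, fun x => by rw [hdecomp, hall]⟩

open Classical in
/-- Indicator of a set with values in `ZMod 3`. -/
noncomputable def ind {I : Type} (A : Set I) : I → ZMod 3 :=
  fun i => if i ∈ A then 1 else 0

/-- Every non-constant homomorphism `f : C^I → C` is of the form `f(a) = α(a_U)` for some
ultrafilter `U` on `I` and some automorphism `α : x ↦ x + c` of `C`, i.e.
`a⁻¹(f(a) - c) ∈ U` for all `a`. -/
theorem all_hom (I : Type) (f : (I → ZMod 3) → ZMod 3)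
    (hf : ∀ u v : I → ZMod 3, (∀ i, Cedge (u i) (v i)) → Cedge (f u) (f v))
    (hnc : ¬ ∃ c, ∀ a, f a = c) :
    ∃ (U : Ultrafilter I) (c : ZMod 3), ∀ a : I → ZMod 3, a ⁻¹' {f a - c} ∈ U := by
  classical
  have qhom : ∀ a : I → ZMod 3, IsHomJ (ZMod 3) (fun x => f (x ∘ a)) := by
    intro a u v huv
    exact hf _ _ (fun i => huv (a i))
  -- behaviour on constants
  have Dcyc : ∀ y : ZMod 3, Cedge (f (fun _ => y)) (f (fun _ => y + 1)) := by
    intro y; exact hf _ _ (fun i => Or.inr rfl)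
  have notconstD : ¬ (∀ y : ZMod 3, f (fun _ => y) = f (fun _ => (0:ZMod 3))) := by
    intro hk
    apply hnc
    refine ⟨f (fun _ => 0), fun a => ?_⟩
    rcases classify (ZMod 3) _ (qhom a) with ⟨d, hd⟩ | ⟨j, c, hjc⟩
    · have h0 : f (fun _ => (0:ZMod 3)) = d := hd (fun _ => 0)
      have ha : f a = d := hd id
      rw [ha, h0]
    · exfalso
      have h0 : f (fun _ => (0:ZMod 3)) = (0:ZMod 3) + c := hjc (fun _ => 0)
      have h1 : f (fun _ => (1:ZMod 3)) = (1:ZMod 3) + c := hjc (fun _ => 1)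
      have h01 := hk 1
      rw [h0, h1] at h01
      exact (show ∀ c : ZMod 3, 1 + c = 0 + c → False by decide) c h01
  have hc : ∀ y : ZMod 3, f (fun _ => y) = y + f (fun _ => (0:ZMod 3)) := by
    rcases fact1 (fun y => f (fun _ => y)) (fun y => Dcyc y) with h | h
    · exact absurd (fun y => h y) notconstD
    · exact fun y => h y
  set c0 : ZMod 3 := f (fun _ => (0:ZMod 3)) with hc0
  -- the master identity
  have hstar : ∀ (a : I → ZMod 3) (x : ZMod 3 → ZMod 3),
      f (x ∘ a) = x (f a - c0) + c0 := by
    intro a x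
    rcases classify (ZMod 3) _ (qhom a) with ⟨d, hd⟩ | ⟨j, c, hjc⟩
    · exfalso
      have h0 : (0:ZMod 3) + c0 = d := by rw [← hc 0]; exact hd (fun _ => 0)
      have h1 : (1:ZMod 3) + c0 = d := by rw [← hc 1]; exact hd (fun _ => 1)
      exact (show ∀ c0 d : ZMod 3, 0 + c0 = d → 1 + c0 = d → False by decide) c0 d h0 h1
    · have hcc : c = c0 := by
        have h0 : (0:ZMod 3) + c0 = (0:ZMod 3) + c := by rw [← hc 0]; exact hjc (fun _ => 0)
        simpa using h0.symm
      have hfa : f a = j + c := hjc id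
      have hj : j = f a - c0 := by rw [hfa, hcc]; ring
      have hx : f (x ∘ a) = x j + c := hjc x
      rw [hx, hj, hcc]
  -- the "measure" φ
  have hφ : ∀ (a : I → ZMod 3) (x : ZMod 3 → ZMod 3),
      f (x ∘ a) - c0 = x (f a - c0) := by
    intro a x; rw [hstar]; ring
  -- range of φ on indicators
  have hrange : ∀ A : Set I, f (ind A) - c0 = 0 ∨ f (ind A) - c0 = 1 := by
    intro A
    have hxy : (fun t : ZMod 3 => if t = 0 then 0 else 1) ∘ ind A = ind A := by
      funext i
      by_cases hi : i ∈ A <;> simp [ind, hi]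
    have h2 := hφ (ind A) (fun t => if t = 0 then 0 else 1)
    rw [hxy] at h2
    exact (show ∀ t : ZMod 3, t = (if t = 0 then 0 else 1) → t = 0 ∨ t = 1 by decide)
      _ h2
  -- complements
  have hcompl : ∀ A : Set I,
      f (ind Aᶜ) - c0 = if f (ind A) - c0 = 0 then 1 else 0 := by
    intro A
    have hxy : (fun t : ZMod 3 => if t = 0 then 1 else 0) ∘ ind A = ind Aᶜ := by
      funext i
      by_cases hi : i ∈ A <;> simp [ind, hi]
    have h2 := hφ (ind A) (fun t => if t = 0 then 1 else 0)
    rw [hxy] at h2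
    exact h2
  -- three-block decomposition for disjoint sets
  have block : ∀ D E : Set I, (∀ i, i ∈ D → i ∈ E → False) →
      ∃ t : ZMod 3, f (ind D) - c0 = (if t = 1 then 1 else 0) ∧
        f (ind E) - c0 = (if t = 2 then 1 else 0) ∧
        f (ind (D ∪ E)) - c0 = (if t = 0 then 0 else 1) := by
    intro D E hDE
    set a : I → ZMod 3 := fun i => if i ∈ D then 1 else if i ∈ E then 2 else 0 with ha
    refine ⟨f a - c0, ?_, ?_, ?_⟩
    · have hxy : (fun t : ZMod 3 => if t = 1 then 1 else 0) ∘ a = ind D := by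
        funext i
        by_cases hD : i ∈ D
        · simp [ha, ind, hD]
        · by_cases hE : i ∈ E <;> simp [ha, ind, hD, hE] <;> decide
      rw [← hxy]; exact hφ a _
    · have hxy : (fun t : ZMod 3 => if t = 2 then 1 else 0) ∘ a = ind E := by
        funext i
        by_cases hD : i ∈ D
        · have hE : i ∉ E := fun hE => hDE i hD hE
          simp [ha, ind, hD, hE] <;> decide
        · by_cases hE : i ∈ E <;> simp [ha, ind, hD, hE] <;> decide
      rw [← hxy]; exact hφ a _
    · have hxy : (fun t : ZMod 3 => if t = 0 then 0 else 1) ∘ a = ind (D ∪ E) := by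
        funext i
        by_cases hD : i ∈ D
        · simp [ha, ind, hD]
        · by_cases hE : i ∈ E <;> simp [ha, ind, hD, hE] <;> decide
      rw [← hxy]; exact hφ a _
  -- ultrafilter properties
  have hU_univ : f (ind (Set.univ : Set I)) - c0 = 1 := by
    have : ind (Set.univ : Set I) = fun _ => (1:ZMod 3) := by
      funext i; simp [ind]
    rw [this, hc 1]; ring
  have hU_up : ∀ A S : Set I, A ⊆ S → f (ind A) - c0 = 1 → f (ind S) - c0 = 1 := by
    intro A S hAS hA
    obtain ⟨t, h1, h2, h3⟩ := block A (S \ A) (fun i hiA hiS => hiS.2 hiA)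
    rw [hA] at h1
    have ht : t = 1 :=
      (show ∀ t : ZMod 3, (1:ZMod 3) = (if t = 1 then 1 else 0) → t = 1 by decide) t h1
    rw [ht] at h3
    have hUn : A ∪ S \ A = S := Set.union_diff_cancel hAS
    rw [hUn] at h3
    simpa using h3
  have hU_inter : ∀ A B : Set I, f (ind A) - c0 = 1 → f (ind B) - c0 = 1 →
      f (ind (A ∩ B)) - c0 = 1 := by
    intro A B hA hB
    by_contra hAB
    have hsub : B ⊆ (A ∩ B) ∪ Aᶜ := by
      intro i hiB
      by_cases hiA : i ∈ A
      · exact Or.inl ⟨hiA, hiB⟩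
      · exact Or.inr hiA
    have hUn : f (ind ((A ∩ B) ∪ Aᶜ)) - c0 = 1 := hU_up B _ hsub hB
    obtain ⟨t, h1, h2, h3⟩ := block (A ∩ B) Aᶜ (fun i hi hic => hic hi.1)
    rw [hUn] at h3
    have ht : t = 1 ∨ t = 2 :=
      (show ∀ t : ZMod 3, (1:ZMod 3) = (if t = 0 then 0 else 1) → t = 1 ∨ t = 2 by decide)
        t h3
    rcases ht with rfl | rfl
    · simp only [if_pos rfl] at h1
      exact hAB h1
    · simp only [if_pos rfl] at h2
      have := hcompl A
      rw [hA, h2] at this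
      exact (show ((1:ZMod 3) = if (1:ZMod 3) = 0 then 1 else 0) → False by decide) this
  -- build the ultrafilter
  let F : Filter I :=
    { sets := {A | f (ind A) - c0 = 1}
      univ_sets := hU_univ
      sets_of_superset := fun hA hAB => hU_up _ _ hAB hA
      inter_sets := fun hA hB => hU_inter _ _ hA hB }
  have hFmem : ∀ s : Set I, s ∈ F ↔ f (ind s) - c0 = 1 := fun s => Iff.rfl
  have hFcompl : ∀ s : Set I, sᶜ ∉ F ↔ s ∈ F := by
    intro s
    rw [hFmem, hFmem]
    rcases hrange s with h | h
    · constructor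
      · intro hn
        exfalso
        apply hn
        rw [hcompl s, h]
        simp
      · intro h1
        exact absurd h1 (by rw [h]; decide)
    · constructor
      · intro _; exact h
      · intro _ hn
        rw [hcompl s, h] at hn
        exact (show ((if (1:ZMod 3) = 0 then (1:ZMod 3) else 0) = 1) → False by decide) hn
  refine ⟨Ultrafilter.ofComplNotMemIff F hFcompl, c0, fun a => ?_⟩
  show f (ind (a ⁻¹' {f a - c0})) - c0 = 1
  have hxy : (fun t : ZMod 3 => if t = f a - c0 then 1 else 0) ∘ a
      = ind (a ⁻¹' {f a - c0}) := by
    funext i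
    by_cases hi : a i = f a - c0 <;> simp [ind, hi]
  have h2 := hφ a (fun t => if t = f a - c0 then 1 else 0)
  rw [hxy] at h2
  rw [h2]
  simp
end

section
/- Let f : C^I → C be a digraph homomorphism with f(0) = f(1), where 0 and 1 denote the constant functions with values 0 and 1. Then f is constant. -/
lemma Cedge_sandwich (c x : ZMod 3) : Cedge c x → Cedge x c → x = c := by
  simp only [Cedge]; revert c x; decide

lemma zmod3_cases (x : ZMod 3) : x = 0 ∨ x = 1 ∨ x = 2 := by revert x; decide

/-- A homomorphism `f : C^I → C` taking the same value on the constant tuples `0` and `1`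
is constant. -/
theorem hom_eq_on_consts_constant (I : Type) (f : (I → ZMod 3) → ZMod 3)
    (hf : ∀ u v : I → ZMod 3, (∀ i, Cedge (u i) (v i)) → Cedge (f u) (f v))
    (h : f (fun _ => 0) = f (fun _ => 1)) :
    ∃ c, ∀ a, f a = c := by
  refine ⟨f (fun _ => 0), fun a => ?_⟩
  set u : I → ZMod 3 := fun i => if a i = 0 then 0 else 1 with hu
  set v : I → ZMod 3 := fun i => if a i = 1 then 1 else 0 with hv
  have hu0 : f u = f (fun _ => 0) := by
    apply Cedge_sandwich
    · apply hf; intro i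
      rcases zmod3_cases (a i) with hx | hx | hx <;> simp [hu, Cedge, hx] <;> decide
    · rw [h]; apply hf; intro i
      rcases zmod3_cases (a i) with hx | hx | hx <;> simp [hu, Cedge, hx] <;> decide
  have hv0 : f v = f (fun _ => 0) := by
    apply Cedge_sandwich
    · apply hf; intro i
      rcases zmod3_cases (a i) with hx | hx | hx <;> simp [hv, Cedge, hx] <;> decide
    · rw [h]; apply hf; intro i
      rcases zmod3_cases (a i) with hx | hx | hx <;> simp [hv, Cedge, hx] <;> decide
  apply Cedge_sandwich
  · rw [← hu0]; apply hf; intro i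
    rcases zmod3_cases (a i) with hx | hx | hx <;> simp [hu, Cedge, hx] <;> decide
  · rw [← hv0]; apply hf; intro i
    rcases zmod3_cases (a i) with hx | hx | hx <;> simp [hv, Cedge, hx] <;> decide
end

section
/- Let A be a set and f : A^n → A an n-ary product decomposition operation, i.e., f(x,...,x) = x for all x, and f(f(x_{1,1},...,x_{1,n}),...,f(x_{n,1},...,x_{n,n})) = f(x_{1,1}, x_{2,2}, ..., x_{n,n}) for all arguments. For each i ≤ n, define ν_i ⊆ A² as the set of pairs (a,b) such that for SOME choice of c_j (j ≠ i), f(c_1,...,c_{i-1},a,c_{i+1},...,c_n) = f(c_1,...,c_{i-1},b,c_{i+1},...,c_n). Then (a,b) ∈ ν_i iff this equality holds for EVERY choice of the c_j. -/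
/-- For an `n`-ary product decomposition operation, agreement in the `i`-th slot for some
choice of other arguments implies agreement for every choice. -/
theorem some_iff_all
    (A : Type) (n : ℕ) (f : (Fin n → A) → A)
    (h1 : ∀ x : A, f (fun _ => x) = x)
    (h2 : ∀ x : Fin n → Fin n → A, f (fun i => f (x i)) = f (fun i => x i i))
    (i : Fin n) (a b : A) :
    (∃ c : Fin n → A, f (Function.update c i a) = f (Function.update c i b)) ↔
      (∀ c : Fin n → A, f (Function.update c i a) = f (Function.update c i b)) := by
  have key : ∀ (c d : Fin n → A) (a : A),
      f (Function.update d i (f (Function.update c i a))) = f (Function.update d i a) := by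
    intro c d a
    have h := h2 (fun j => if j = i then Function.update c i a else fun _ => d j)
    have hl : (fun j => f (if j = i then Function.update c i a else fun _ => d j))
        = Function.update d i (f (Function.update c i a)) := by
      funext j
      by_cases hj : j = i <;> simp [hj, Function.update_apply, h1]
    have hr : (fun j => (if j = i then Function.update c i a else fun _ => d j) j)
        = Function.update d i a := by
      funext j
      by_cases hj : j = i <;> simp [hj, Function.update_apply]
    rw [hl, hr] at h
    exact h
  constructor
  · rintro ⟨c, hc⟩ d
    calc f (Function.update d i a) = f (Function.update d i (f (Function.update c i a))) :=
          (key c d a).symm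
      _ = f (Function.update d i (f (Function.update c i b))) := by rw [hc]
      _ = f (Function.update d i b) := key c d b
  · intro h
    exact ⟨fun _ => a, h _⟩
end

section
/- Let f : A^n → A be an n-ary product decomposition operation and let ν_i be the relations defined by f as above. Then each ν_i is an equivalence relation on A. -/
/-- The relation `ν_i` associated with an `n`-ary product decomposition operation `f`:
`a ν_i b` iff `f` agrees on `a` and `b` placed in the `i`-th slot for some choice of the
other arguments. -/
def nu {A : Type} {n : ℕ} (f : (Fin n → A) → A) (i : Fin n) (a b : A) : Prop :=
  ∃ c : Fin n → A, f (Function.update c i a) = f (Function.update c i b)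

/-- Each `ν_i` is an equivalence relation. -/
theorem nu_equivalence
    (A : Type) (n : ℕ) (f : (Fin n → A) → A)
    (h1 : ∀ x : A, f (fun _ => x) = x)
    (h2 : ∀ x : Fin n → Fin n → A, f (fun i => f (x i)) = f (fun i => x i i)) :
    ∀ i : Fin n, Equivalence (nu f i) := by
  intro i
  -- Key: if `nu f i a b` then `f` agrees on `a`,`b` in slot `i` for *every* choice of others.
  have key : ∀ a b : A, nu f i a b →
      ∀ d : Fin n → A, f (Function.update d i a) = f (Function.update d i b) := by
    rintro a b ⟨c, hc⟩ d
    set x : Fin n → Fin n → A :=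
      fun j => if j = i then Function.update c i a else Function.update d i a with hx
    set x' : Fin n → Fin n → A :=
      fun j => if j = i then Function.update c i b else Function.update d i a with hx'
    have hdiag : (fun j => x j j) = Function.update d i a := by
      funext j
      by_cases hj : j = i
      · subst hj; simp [hx]
      · simp [hx, hj, Function.update_of_ne hj]
    have hdiag' : (fun j => x' j j) = Function.update d i b := by
      funext j
      by_cases hj : j = i
      · subst hj; simp [hx']
      · simp [hx', hj, Function.update_of_ne hj]
    have hrows : (fun j => f (x j)) = fun j => f (x' j) := by
      funext j
      by_cases hj : j = i
      · subst hj; simp [hx, hx', hc]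
      · simp [hx, hx', hj]
    calc f (Function.update d i a) = f (fun j => x j j) := by rw [hdiag]
      _ = f (fun j => f (x j)) := (h2 x).symm
      _ = f (fun j => f (x' j)) := by rw [hrows]
      _ = f (fun j => x' j j) := h2 x'
      _ = f (Function.update d i b) := by rw [hdiag']
  constructor
  · intro a; exact ⟨fun _ => a, rfl⟩
  · rintro a b ⟨c, hc⟩; exact ⟨c, hc.symm⟩
  · intro a b e hab hbe
    obtain ⟨c, hbe⟩ := hbe
    exact ⟨c, (key a b hab c).trans hbe⟩
end

section
/- Let f : A^n → A be an n-ary product decomposition operation with associated equivalence relations ν_1,...,ν_n. Then the map φ : A → ∏_{i=1}^n A/ν_i sending a to (a/ν_1, ..., a/ν_n) is a bijection. -/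
/-- The natural map `φ : A → ∏ᵢ A/ν_i` is a bijection. -/
theorem phi_bijective
    (A : Type) (n : ℕ) (f : (Fin n → A) → A)
    (h1 : ∀ x : A, f (fun _ => x) = x)
    (h2 : ∀ x : Fin n → Fin n → A, f (fun i => f (x i)) = f (fun i => x i i)) :
    Function.Bijective (fun (a : A) (i : Fin n) => Quot.mk (nu f i) a) := by
  have step : ∀ (i : Fin n) (a : A) (c d : Fin n → A),
      f (Function.update d i (f (Function.update c i a))) = f (Function.update d i a) := by
    intro i a c d
    have h := h2 (fun j => if j = i then Function.update c i a else fun _ => d j)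
    have e1 : (fun j => f (if j = i then Function.update c i a else fun _ => d j)) =
        Function.update d i (f (Function.update c i a)) := by
      funext j
      by_cases hj : j = i
      · subst hj; simp
      · simp [hj, Function.update_apply, h1]
    have e2 : (fun j => (if j = i then Function.update c i a else fun _ => d j) j) =
        Function.update d i a := by
      funext j
      by_cases hj : j = i
      · subst hj; simp
      · simp [hj, Function.update_apply]
    rw [e1, e2] at h
    exact h
  have key : ∀ (i : Fin n) (a b : A), nu f i a b → ∀ d,
      f (Function.update d i a) = f (Function.update d i b) := by
    rintro i a b ⟨c, hc⟩ d
    calc f (Function.update d i a)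
        = f (Function.update d i (f (Function.update c i a))) := (step i a c d).symm
      _ = f (Function.update d i (f (Function.update c i b))) := by rw [hc]
      _ = f (Function.update d i b) := step i b c d
  have keyE : ∀ (i : Fin n) (a b : A), Relation.EqvGen (nu f i) a b → ∀ d,
      f (Function.update d i a) = f (Function.update d i b) := by
    intro i a b h
    induction h with
    | rel x y hxy => exact key i x y hxy
    | refl x => intro d; rfl
    | symm x y _ ih => intro d; exact (ih d).symm
    | trans x y z _ _ ih1 ih2 => intro d; exact (ih1 d).trans (ih2 d)
  constructor
  · intro a b hab
    have hR : ∀ i (d : Fin n → A), f (Function.update d i a) = f (Function.update d i b) :=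
      fun i => keyE i a b (Quot.eqvGen_exact (congrFun hab i))
    have h := h2 (fun i => Function.update (fun _ => a) i b)
    have e1 : (fun i => f (Function.update (fun _ => a) i b)) = fun _ : Fin n => a := by
      funext i
      rw [← hR i (fun _ => a)]
      simp [Function.update_eq_self, h1]
    have e2 : (fun i => Function.update (fun _ => a) i b i) = fun _ : Fin n => b := by
      funext i; simp
    rw [e1, e2, h1, h1] at h
    exact h
  · intro g
    refine ⟨f (fun i => Quot.out (g i)), ?_⟩
    funext i
    have hnu : nu f i (f (fun j => Quot.out (g j))) (Quot.out (g i)) := by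
      refine ⟨fun j => Quot.out (g j), ?_⟩
      rw [Function.update_eq_self]
      have := step i (Quot.out (g i)) (fun j => Quot.out (g j)) (fun j => Quot.out (g j))
      rwa [Function.update_eq_self] at this
    calc Quot.mk (nu f i) (f fun j => Quot.out (g j))
        = Quot.mk (nu f i) (Quot.out (g i)) := Quot.sound hnu
      _ = g i := Quot.out_eq _
end

section
/- Let f : A^n → A be an n-ary product decomposition operation with associated equivalences ν_i. Then for all a_1,...,a_n ∈ A and each i, f(a_1,...,a_n) is ν_i-equivalent to a_i. Consequently φ(f(a_1,...,a_n)) = (a_1/ν_1,...,a_n/ν_n), proving surjectivity of φ. -/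
/-- `f(a₁,…,aₙ)` is `ν_i`-equivalent to `a_i` for each `i`; consequently the natural map
`φ : A → ∏ᵢ A/ν_i` is surjective. -/
theorem f_nu_component
    (A : Type) (n : ℕ) (f : (Fin n → A) → A)
    (h1 : ∀ x : A, f (fun _ => x) = x)
    (h2 : ∀ x : Fin n → Fin n → A, f (fun i => f (x i)) = f (fun i => x i i)) :
    (∀ (a : Fin n → A) (i : Fin n), nu f i (f a) (a i)) ∧
    ((∀ (a : Fin n → A), (fun (i : Fin n) => Quot.mk (nu f i) (f a)) =
        (fun (i : Fin n) => Quot.mk (nu f i) (a i))) ∧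
      Function.Surjective (fun (a : A) (i : Fin n) => Quot.mk (nu f i) a)) := by
  have key : ∀ (a : Fin n → A) (i : Fin n), nu f i (f a) (a i) := by
    intro a i
    refine ⟨a, ?_⟩
    have h := h2 (fun j => if j = i then a else fun _ => a j)
    have hl : (fun j => f (if j = i then a else fun _ => a j)) =
        Function.update a i (f a) := by
      funext j
      by_cases hj : j = i
      · subst hj; simp
      · simp [hj, Function.update_of_ne hj, h1]
    have hr : (fun j => (if j = i then a else fun _ => a j) j) = a := by
      funext j
      by_cases hj : j = i <;> simp [hj]
    rw [hl, hr] at h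
    rw [h, Function.update_eq_self]
  refine ⟨key, ?_, ?_⟩
  · intro a
    funext i
    exact Quot.sound (key a i)
  · intro b
    choose a ha using fun i => Quot.exists_rep (b i)
    refine ⟨f a, ?_⟩
    funext i
    simpa [ha i] using Quot.sound (key a i)
end

section
/- Let 𝔸 be a relational structure (possibly with infinitary relations) admitting an n-ary product decomposition polymorphism f. Then 𝔸 is isomorphic to the product ∏_{i=1}^n 𝔸/ν_i of its quotient structures, via the map a ↦ (a/ν_1,...,a/ν_n); in particular this map and its inverse preserve all relations. -/
section Aux
variable {A : Type} {n : ℕ} {f : (Fin n → A) → A}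

lemma nu_strong (h1 : ∀ x : A, f (fun _ => x) = x)
    (h2 : ∀ x : Fin n → Fin n → A, f (fun i => f (x i)) = f (fun i => x i i))
    {i : Fin n} {a b : A} (h : nu f i a b) (c : Fin n → A) :
    f (Function.update c i a) = f (Function.update c i b) := by
  obtain ⟨c₀, hc⟩ := h
  have key : ∀ x : A, f (Function.update c i x) =
      f (Function.update c i (f (Function.update c₀ i x))) := by
    intro x
    have H := h2 (fun k => if k = i then Function.update c₀ i x else fun _ => c k)
    have e1 : (fun k => f ((fun k => if k = i then Function.update c₀ i x
        else fun _ => c k) k)) = Function.update c i (f (Function.update c₀ i x)) := by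
      funext k
      by_cases hk : k = i
      · subst hk; simp
      · simp [hk, Function.update_of_ne hk, h1]
    have e2 : (fun k => (fun k => if k = i then Function.update c₀ i x
        else fun _ => c k) k k) = Function.update c i x := by
      funext k
      by_cases hk : k = i
      · subst hk; simp
      · simp [hk, Function.update_of_ne hk]
    rw [e1, e2] at H
    exact H.symm
  rw [key a, key b, hc]

lemma quot_eq_strong (h1 : ∀ x : A, f (fun _ => x) = x)
    (h2 : ∀ x : Fin n → Fin n → A, f (fun i => f (x i)) = f (fun i => x i i))
    {i : Fin n} {a b : A} (h : Quot.mk (nu f i) a = Quot.mk (nu f i) b) :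
    ∀ c, f (Function.update c i a) = f (Function.update c i b) := by
  have H := Quot.eq.mp h
  clear h
  induction H with
  | rel x y hxy => exact nu_strong h1 h2 hxy
  | refl x => intro c; rfl
  | symm x y _ ih => intro c; exact (ih c).symm
  | trans x y z _ _ ih1 ih2 => intro c; exact (ih1 c).trans (ih2 c)

lemma tele {x y : Fin n → A}
    (h : ∀ (k : Fin n) (c : Fin n → A),
      f (Function.update c k (x k)) = f (Function.update c k (y k))) :
    f x = f y := by
  have step : ∀ m, f x = f (fun k : Fin n => if (k : ℕ) < m then y k else x k) := by
    intro m
    induction m with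
    | zero => simp
    | succ m ih =>
      by_cases hm : m < n
      · have e1 : (fun k : Fin n => if (k : ℕ) < m then y k else x k)
            = Function.update (fun k : Fin n => if (k : ℕ) < m then y k else x k)
              ⟨m, hm⟩ (x ⟨m, hm⟩) := by
          funext k
          rcases eq_or_ne k ⟨m, hm⟩ with hk | hk
          · subst hk; rw [Function.update_self]; simp
          · rw [Function.update_of_ne hk]
        have e2 : (fun k : Fin n => if (k : ℕ) < m + 1 then y k else x k)
            = Function.update (fun k : Fin n => if (k : ℕ) < m then y k else x k)
              ⟨m, hm⟩ (y ⟨m, hm⟩) := by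
          funext k
          rcases eq_or_ne k ⟨m, hm⟩ with hk | hk
          · subst hk; rw [Function.update_self]; simp
          · rw [Function.update_of_ne hk]
            have hkm : (k : ℕ) ≠ m := fun hh => hk (Fin.ext hh)
            rcases lt_or_ge (k : ℕ) m with h' | h'
            · rw [if_pos h', if_pos (by omega)]
            · rw [if_neg (by omega), if_neg (by omega)]
        rw [e2, ih]
        conv_lhs => rw [e1]
        exact h ⟨m, hm⟩ _
      · have e3 : (fun k : Fin n => if (k : ℕ) < m + 1 then y k else x k)
            = (fun k : Fin n => if (k : ℕ) < m then y k else x k) := by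
          funext k
          have hkm : (k : ℕ) < m := by have := k.isLt; omega
          rw [if_pos hkm, if_pos (by omega)]
        rw [e3]; exact ih
  have gn : (fun k : Fin n => if (k : ℕ) < n then y k else x k) = y := by
    funext k; rw [if_pos k.isLt]
  have := step n
  rwa [gn] at this

lemma absorb (h1 : ∀ x : A, f (fun _ => x) = x)
    (h2 : ∀ x : Fin n → Fin n → A, f (fun i => f (x i)) = f (fun i => x i i))
    (c : Fin n → A) (i : Fin n) : f (Function.update c i (f c)) = f c := by
  have H := h2 (fun k => if k = i then c else fun _ => c k)
  have e1 : (fun k => f ((fun k => if k = i then c else fun _ => c k) k)) =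
      Function.update c i (f c) := by
    funext k
    by_cases hk : k = i
    · subst hk; simp
    · simp [hk, Function.update_of_ne hk, h1]
  have e2 : (fun k => (fun k => if k = i then c else fun _ => c k) k k) = c := by
    funext k
    by_cases hk : k = i
    · subst hk; simp
    · simp [hk]
  rw [e1, e2] at H
  exact H

end Aux

/-- A relational structure admitting an `n`-ary product decomposition polymorphism is
isomorphic to the product of its quotients `𝔸/ν_i` via `a ↦ (a/ν₁, …, a/νₙ)`: the map is
bijective and both it and its inverse preserve all relations (a tuple is in a relation iff
each of its blockwise images is in the corresponding quotient relation). -/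
theorem product_decomposition
    (A : Type) (ι : Type) (J : ι → Type) (R : ∀ s : ι, Set (J s → A))
    (n : ℕ) (f : (Fin n → A) → A)
    (hpol : ∀ (s : ι) (t : Fin n → J s → A),
      (∀ k, t k ∈ R s) → (fun j => f (fun k => t k j)) ∈ R s)
    (h1 : ∀ x : A, f (fun _ => x) = x)
    (h2 : ∀ x : Fin n → Fin n → A, f (fun i => f (x i)) = f (fun i => x i i)) :
    Function.Bijective (fun (a : A) (i : Fin n) => Quot.mk (nu f i) a) ∧
    (∀ (s : ι) (t : J s → A), t ∈ R s ↔
      ∀ i : Fin n, ∃ t' ∈ R s, ∀ j, Quot.mk (nu f i) (t j) = Quot.mk (nu f i) (t' j)) := by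
  constructor
  · constructor
    · intro a b hab
      have hab' : ∀ i : Fin n, Quot.mk (nu f i) a = Quot.mk (nu f i) b :=
        fun i => congrFun hab i
      have := tele (f := f) (x := fun _ => a) (y := fun _ => b)
        (fun k c => quot_eq_strong h1 h2 (hab' k) c)
      rw [h1 a, h1 b] at this
      exact this
    · intro q
      refine ⟨f (fun i => (q i).out), ?_⟩
      funext i
      have : q i = Quot.mk (nu f i) (q i).out := (Quot.out_eq (q i)).symm
      rw [this]
      apply Quot.sound
      refine ⟨fun i => (q i).out, ?_⟩
      rw [absorb h1 h2, Function.update_eq_self]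
  · intro s t
    constructor
    · intro ht i
      exact ⟨t, ht, fun j => rfl⟩
    · intro h
      choose t' ht' hq using h
      have hu := hpol s t' ht'
      have : t = fun j => f (fun k => t' k j) := by
        funext j
        have := tele (f := f) (x := fun k => t' k j) (y := fun _ => t j)
          (fun k c => quot_eq_strong h1 h2 (hq k j).symm c)
        rw [h1 (t j)] at this
        exact this.symm
      rw [this]
      exact hu
end

section
/- Let f : A^n → A be an n-ary product decomposition operation and g : A → A satisfy g^n = id and g(f(x_1,...,x_n)) = f(g(x_2),...,g(x_n),g(x_1)). Then for each i (indices mod n), g maps ν_i onto ν_{i−1}: (a,b) ∈ ν_i iff (g(a),g(b)) ∈ ν_{i−1}. -/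
/-!
Since `g (f x) = f (g ∘ x ∘ (· + 1))`, applying `g` to both sides of a witness
`f (update c i a) = f (update c i b)` of `ν_i` gives a witness of `ν_{i-1}` for `g a, g b` with
the shifted tuple `g ∘ c ∘ (· + 1)`. As `g^[n] = id`, `g` is a bijection, so every tuple is such a
shifted tuple and the passage from one witness to the other loses nothing.
-/

open Function

theorem Function.bijective_of_iterate_eq_self {α : Type*} {g : α → α} {n : ℕ} (hn : n ≠ 0)
    (h : ∀ x, g^[n] x = x) : Bijective g := by
  obtain ⟨m, rfl⟩ := Nat.exists_eq_succ_of_ne_zero hn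
  have hid : g^[m + 1] = id := funext h
  refine ⟨Injective.of_comp (f := g^[m]) ?_, Surjective.of_comp (g := g^[m]) ?_⟩
  · rw [← iterate_succ, hid]
    exact injective_id
  · rw [← iterate_succ', hid]
    exact surjective_id

section Shift

variable {A : Type} {n : ℕ} [NeZero n]

theorem update_shift (g : A → A) (c : Fin n → A) (i : Fin n) (x : A) :
    (fun k => g (update c i x (k + 1))) = update (fun k => g (c (k + 1))) (i - 1) (g x) := by
  funext k
  by_cases hk : k = i - 1
  · subst hk
    simp
  · have hk' : k + 1 ≠ i := fun h => hk (eq_sub_of_add_eq h)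
    rw [update_of_ne hk, update_of_ne hk']

theorem surjective_shift {g : A → A} (hg : Surjective g) :
    Surjective fun c : Fin n → A => fun k => g (c (k + 1)) :=
  fun c => ⟨fun k => surjInv hg (c (k - 1)), funext fun k => by simp [surjInv_eq hg]⟩

theorem nu_iff_nu_sub_one {f : (Fin n → A) → A} {g : A → A} (hg : Bijective g)
    (hf : ∀ x : Fin n → A, g (f x) = f (fun k => g (x (k + 1)))) (i : Fin n) (a b : A) :
    nu f i a b ↔ nu f (i - 1) (g a) (g b) := by
  unfold nu
  refine Iff.trans (exists_congr fun c => ?_) (surjective_shift hg.2).exists.symm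
  rw [← update_shift, ← update_shift, ← hf, ← hf, hg.1.eq_iff]

end Shift

theorem shift_nu_general
    (A : Type) (n : ℕ) [NeZero n] (f : (Fin n → A) → A) (g : A → A)
    (hg1 : ∀ x : A, g^[n] x = x)
    (hg2 : ∀ x : Fin n → A, g (f x) = f (fun k => g (x (k + 1)))) :
    ∀ (i : Fin n) (a b : A), nu f i a b ↔ nu f (i - 1) (g a) (g b) :=
  nu_iff_nu_sub_one (bijective_of_iterate_eq_self (NeZero.ne n) hg1) hg2

/-- A coordinate shift `g` maps `ν_i` onto `ν_{i-1}` (indices mod `n`). -/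
theorem shift_nu
    (A : Type) (n : ℕ) [NeZero n] (f : (Fin n → A) → A) (g : A → A)
    (h1 : ∀ x : A, f (fun _ => x) = x)
    (h2 : ∀ x : Fin n → Fin n → A, f (fun i => f (x i)) = f (fun i => x i i))
    (hg1 : ∀ x : A, g^[n] x = x)
    (hg2 : ∀ x : Fin n → A, g (f x) = f (fun k => g (x (k + 1)))) :
    ∀ (i : Fin n) (a b : A), nu f i a b ↔ nu f (i - 1) (g a) (g b) :=
  shift_nu_general A n f g hg1 hg2
end

section
/- A relational structure 𝔸 is isomorphic to the n-th power B^n of some relational structure 𝔹 (of the same signature) if and only if 𝔸 has polymorphisms f (n-ary) and g (unary) satisfying: f(x,...,x)=x; f(f(x_{1,1},...,x_{1,n}),...,f(x_{n,1},...,x_{n,n})) = f(x_{1,1},...,x_{n,n}); g^n(x)=x; and g(f(x_1,...,x_n)) = f(g(x_2),...,g(x_n),g(x_1)). -/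
/-!
In `Bⁿ` the diagonal `f` and the cyclic shift `g` satisfy the identities and preserve every
coordinatewise relation. Conversely, given `f` and `g` on `A`, put
`p x = f (x, g^{-1} x, …, g^{-(n-1)} x)`, which in `Bⁿ` is `x ↦ (x₀, …, x₀)`. The identities
make `p` idempotent with image `B` fixed by `g`, and `x ↦ (p (gᵏ x))ₖ` is a bijection from `A`
onto `Bⁿ` with inverse `f`. Since `p` and `g` are polymorphisms, it is an
isomorphism once `B` carries the relations induced from `A`.
-/

open Function Fin.NatCast

section Polymorphism

variable {A : Type*} {ι : Type*} {J : ι → Type*} (R : ∀ s, Set (J s → A))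

def IsPolymorphism {κ : Type*} (f : (κ → A) → A) : Prop :=
  ∀ (s : ι) (t : κ → J s → A), (∀ k, t k ∈ R s) → (fun j => f fun k => t k j) ∈ R s

def IsEndomorphism (g : A → A) : Prop :=
  ∀ (s : ι) (t : J s → A), t ∈ R s → (fun j => g (t j)) ∈ R s

variable {R}

theorem IsEndomorphism.iterate {g : A → A} (hg : IsEndomorphism R g) (m : ℕ) :
    IsEndomorphism R g^[m] := by
  induction m with
  | zero => exact fun _ _ ht => ht
  | succ m ih =>
    intro s t ht
    simpa only [iterate_succ_apply'] using hg s _ (ih s t ht)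

theorem IsPolymorphism.comp_endomorphism {κ : Type*} {f : (κ → A) → A} {h : κ → A → A}
    (hf : IsPolymorphism R f) (hh : ∀ k, IsEndomorphism R (h k)) :
    IsEndomorphism R fun x => f fun k => h k x :=
  fun s t ht => hf s (fun k j => h k (t j)) fun k => hh k s t ht

end Polymorphism

variable {A : Type*} {n : ℕ}

theorem iterate_val_add {g : A → A} (hg : ∀ x, g^[n] x = x) (k m : Fin n) (x : A) :
    g^[(k + m).val] x = g^[k.val] (g^[m.val] x) := by
  rw [Fin.val_add, IsPeriodicPt.iterate_mod_apply (hg x), iterate_add_apply]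

theorem iterate_map_of_comp_shift [NeZero n] {f : (Fin n → A) → A} {g : A → A}
    (h : ∀ x : Fin n → A, g (f x) = f fun k => g (x (k + 1))) (m : ℕ) (x : Fin n → A) :
    g^[m] (f x) = f fun k => g^[m] (x (k + m)) := by
  induction m generalizing x with
  | zero => simp
  | succ m ih =>
    simp only [iterate_succ_apply', ih, h, Nat.cast_succ, add_assoc, add_comm (1 : Fin n)]

structure IsPowerDecomposition [NeZero n] (f : (Fin n → A) → A) (g : A → A) : Prop where
  map_const : ∀ x : A, f (fun _ => x) = x
  map_map_diag : ∀ x : Fin n → Fin n → A, f (fun i => f (x i)) = f (fun i => x i i)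
  iterate_eq_self : ∀ x : A, g^[n] x = x
  map_comp_shift : ∀ x : Fin n → A, g (f x) = f fun k => g (x (k + 1))

section Power

variable {B : Type*} (e : A ≃ (Fin n → B))
variable {ι : Type*} {J : ι → Type*} {R : ∀ s, Set (J s → A)} {RB : ∀ s, Set (J s → B)}

def diagOp (x : Fin n → A) : A := e.symm fun k => e (x k) k

theorem isPolymorphism_diagOp (hR : ∀ s t, t ∈ R s ↔ ∀ k, (fun j => e (t j) k) ∈ RB s) :
    IsPolymorphism R (diagOp e) := fun s t ht => by
  simpa only [hR, diagOp, Equiv.apply_symm_apply] using fun k => (hR s (t k)).1 (ht k) k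

variable [NeZero n]

def shiftOp (x : A) : A := e.symm fun k => e x (k + 1)

theorem isEndomorphism_shiftOp (hR : ∀ s t, t ∈ R s ↔ ∀ k, (fun j => e (t j) k) ∈ RB s) :
    IsEndomorphism R (shiftOp e) := fun s t ht => by
  simpa only [hR, shiftOp, Equiv.apply_symm_apply] using fun k => (hR s t).1 ht (k + 1)

theorem apply_shiftOp_iterate (m : ℕ) (x : A) (k : Fin n) :
    e ((shiftOp e)^[m] x) k = e x (k + m) := by
  induction m generalizing k with
  | zero => simp
  | succ m ih => simp only [iterate_succ_apply', shiftOp, Equiv.apply_symm_apply, ih,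
      Nat.cast_succ, add_comm (m : Fin n), add_assoc]

theorem isPowerDecomposition_diagOp_shiftOp : IsPowerDecomposition (diagOp e) (shiftOp e) where
  map_const := e.symm_apply_apply
  map_map_diag _ := by simp only [diagOp, Equiv.apply_symm_apply]
  iterate_eq_self x := e.injective <| funext fun k => by simp [apply_shiftOp_iterate]
  map_comp_shift _ := by simp only [diagOp, shiftOp, Equiv.apply_symm_apply]

end Power

namespace IsPowerDecomposition

def proj (f : (Fin n → A) → A) (g : A → A) (x : A) : A := f fun k => g^[(-k).val] x

variable {f : (Fin n → A) → A} {g : A → A}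

theorem isEndomorphism_proj {ι : Type*} {J : ι → Type*} {R : ∀ s, Set (J s → A)}
    (hf : IsPolymorphism R f) (hg : IsEndomorphism R g) : IsEndomorphism R (proj f g) :=
  hf.comp_endomorphism fun k => hg.iterate (-k).val

variable [NeZero n]

theorem iterate_val_map (hfg : IsPowerDecomposition f g) (m : Fin n) (x : Fin n → A) :
    g^[m.val] (f x) = f fun k => g^[m.val] (x (k + m)) := by
  simpa only [Fin.cast_val_eq_self] using iterate_map_of_comp_shift hfg.map_comp_shift m.val x

theorem map_proj_iterate (hfg : IsPowerDecomposition f g) (x : A) :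
    f (fun k => proj f g (g^[k.val] x)) = x := by
  simp only [proj, ← iterate_val_add hfg.iterate_eq_self, hfg.map_map_diag, neg_add_cancel,
    Fin.val_zero, iterate_zero, id_eq, hfg.map_const]

theorem proj_iterate_map (hfg : IsPowerDecomposition f g) (k : Fin n) (c : Fin n → A) :
    proj f g (g^[k.val] (f c)) = proj f g (g^[k.val] (c k)) := by
  simp only [proj, hfg.iterate_val_map, ← iterate_val_add hfg.iterate_eq_self, hfg.map_map_diag,
    add_neg_cancel, zero_add]

theorem proj_proj (hfg : IsPowerDecomposition f g) (x : A) :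
    proj f g (proj f g x) = proj f g x := by
  have h := hfg.proj_iterate_map 0 fun k => g^[(-k).val] x
  simp only [Fin.val_zero, iterate_zero, id_eq, neg_zero] at h
  exact h

theorem iterate_proj (hfg : IsPowerDecomposition f g) (m : Fin n) (x : A) :
    g^[m.val] (proj f g x) = proj f g x := by
  simp only [proj, hfg.iterate_val_map, ← iterate_val_add hfg.iterate_eq_self,
    neg_add_rev, add_neg_cancel_left]

theorem iterate_of_isFixedPt (hfg : IsPowerDecomposition f g) {y : A} (hy : IsFixedPt (proj f g) y)
    (m : Fin n) : g^[m.val] y = y := by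
  rw [← hy]
  exact hfg.iterate_proj m y

def equivFixedPoints (hfg : IsPowerDecomposition f g) :
    A ≃ (Fin n → fixedPoints (proj f g)) where
  toFun x k := ⟨proj f g (g^[k.val] x), hfg.proj_proj _⟩
  invFun b := f fun k => b k
  left_inv := hfg.map_proj_iterate
  right_inv b := funext fun k => Subtype.ext <| by
    simp only [hfg.proj_iterate_map, hfg.iterate_of_isFixedPt (b k).2]
    exact (b k).2

theorem mem_iff_forall_proj_iterate_mem {ι : Type*} {J : ι → Type*} {R : ∀ s, Set (J s → A)}
    (hfg : IsPowerDecomposition f g) (hf : IsPolymorphism R f)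
    (hg : IsEndomorphism R g) {s : ι} (t : J s → A) :
    t ∈ R s ↔ ∀ k : Fin n, (fun j => proj f g (g^[k.val] (t j))) ∈ R s := by
  refine ⟨fun ht k => isEndomorphism_proj hf hg s _ (hg.iterate k.val s t ht), fun h => ?_⟩
  simpa only [hfg.map_proj_iterate] using hf s _ h

end IsPowerDecomposition

/-- A relational structure is isomorphic to the `n`-th power of some relational structure
(of the same signature) iff it has polymorphisms `f` (n-ary) and `g` (unary) forming an
`n`-ary power decomposition operation with coordinate shift. -/
theorem power_decomposition_iff
    (A : Type) (ι : Type) (J : ι → Type) (R : ∀ s : ι, Set (J s → A))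
    (n : ℕ) [NeZero n] :
    (∃ (B : Type) (RB : ∀ s : ι, Set (J s → B)) (e : A ≃ (Fin n → B)),
      ∀ (s : ι) (t : J s → A), t ∈ R s ↔ ∀ k : Fin n, (fun j => e (t j) k) ∈ RB s) ↔
    (∃ (f : (Fin n → A) → A) (g : A → A),
      (∀ (s : ι) (t : Fin n → J s → A),
        (∀ k, t k ∈ R s) → (fun j => f (fun k => t k j)) ∈ R s) ∧
      (∀ (s : ι) (t : J s → A), t ∈ R s → (fun j => g (t j)) ∈ R s) ∧
      (∀ x : A, f (fun _ => x) = x) ∧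
      (∀ x : Fin n → Fin n → A, f (fun i => f (x i)) = f (fun i => x i i)) ∧
      (∀ x : A, g^[n] x = x) ∧
      (∀ x : Fin n → A, g (f x) = f (fun k => g (x (k + 1))))) := by
  constructor
  · rintro ⟨B, RB, e, hR⟩
    obtain ⟨h₁, h₂, h₃, h₄⟩ := isPowerDecomposition_diagOp_shiftOp e
    exact ⟨diagOp e, shiftOp e, isPolymorphism_diagOp e hR, isEndomorphism_shiftOp e hR,
      h₁, h₂, h₃, h₄⟩
  · rintro ⟨f, g, hf, hg, h₁, h₂, h₃, h₄⟩
    have hfg : IsPowerDecomposition f g := ⟨h₁, h₂, h₃, h₄⟩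
    exact ⟨fixedPoints (IsPowerDecomposition.proj f g), fun s => {u | (fun j => (u j : A)) ∈ R s},
      hfg.equivFixedPoints, fun s t => hfg.mem_iff_forall_proj_iterate_mem hf hg t⟩
end

section
/- If an n-ary power decomposition operation f (with coordinate shift g) exists on a set A with |A| ≥ 2, then f depends on each of its n coordinates, i.e., for each i there exist tuples differing only in coordinate i on which f takes different values. -/
/-!
Since `g^[n] = id`, `g` is injective, so the relation `g (f x) = f (fun k => g (x (k + 1)))` shows
that if `f` ignores coordinate `j` then it ignores coordinate `j + 1`. Thus ignoring one coordinate
means ignoring all of them, which for finitely many coordinates makes `f` constant; this contradicts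
`f (fun _ => x) = x` for two distinct points `x`.
-/

open Function Set

section DependsOn

variable {ι β : Type*} {α : ι → Type*} {f : (Π i, α i) → β}

lemma dependsOn_compl_singleton_iff [DecidableEq ι] {i : ι} :
    DependsOn f {i}ᶜ ↔ ∀ c a b, f (update c i a) = f (update c i b) := by
  refine ⟨fun hf c a b => hf fun j hj => ?_, fun hf x y hxy => ?_⟩
  · rw [update_of_ne hj, update_of_ne hj]
  · have hy : y = update x i (y i) := by
      ext j
      rcases eq_or_ne j i with rfl | hj
      · simp
      · rw [update_of_ne hj, hxy j hj]
    rw [← update_eq_self i x, hy, hf]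

lemma DependsOn.inter {s t : Set ι} (hs : DependsOn f s) (ht : DependsOn f t) :
    DependsOn f (s ∩ t) := by
  classical
  intro x y hxy
  calc f x = f (s.piecewise x y) := hs fun i hi => (piecewise_eq_of_mem s x y hi).symm
    _ = f y := ht fun i hi => by
      by_cases his : i ∈ s
      · rw [piecewise_eq_of_mem s x y his, hxy i ⟨his, hi⟩]
      · exact piecewise_eq_of_notMem s x y his

lemma DependsOn.biInter_finset {κ : Type*} {s : κ → Set ι} (t : Finset κ)
    (h : ∀ k ∈ t, DependsOn f (s k)) : DependsOn f (⋂ k ∈ t, s k) := by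
  classical
  induction t using Finset.induction_on with
  | empty => simpa using dependsOn_univ f
  | insert k t _ ih =>
    rw [Finset.set_biInter_insert]
    exact (h k (t.mem_insert_self k)).inter (ih fun l hl => h l (Finset.mem_insert_of_mem hl))

lemma DependsOn.iInter {κ : Type*} [Finite κ] {s : κ → Set ι} (h : ∀ k, DependsOn f (s k)) :
    DependsOn f (⋂ k, s k) := by
  have := Fintype.ofFinite κ
  simpa using DependsOn.biInter_finset Finset.univ fun k _ => h k

lemma dependsOn_empty_of_forall_compl_singleton [Finite ι] (h : ∀ i, DependsOn f {i}ᶜ) :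
    DependsOn f ∅ := by
  rw [← iInter_eq_empty_iff.2 fun i => ⟨i, notMem_compl_iff.2 (mem_singleton i)⟩]
  exact DependsOn.iInter (s := fun i => {i}ᶜ) h

lemma DependsOn.image_of_apply_eq {A : Type*} {f : (ι → A) → A} {g : A → A} {e : ι → ι}
    (hg : Injective g) (hfg : ∀ x, g (f x) = f fun k => g (x (e k))) {s : Set ι}
    (hf : DependsOn f s) : DependsOn f (e '' s) := by
  intro x y hxy
  apply hg
  rw [hfg, hfg]
  exact hf fun k hk => by rw [hxy (e k) (mem_image_of_mem e hk)]

end DependsOn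

open Fin.NatCast in
lemma Fin.forall_of_add_one {n : ℕ} [NeZero n] {P : Fin n → Prop} {i : Fin n} (hi : P i)
    (h : ∀ j, P j → P (j + 1)) (j : Fin n) : P j := by
  have hm : ∀ m : ℕ, P (i + m) := by
    intro m
    induction m with
    | zero => simpa using hi
    | succ m ih => simpa [add_assoc] using h _ ih
  simpa using hm (j - i : Fin n)

theorem power_decomposition_depends_general
    (A : Type) (n : ℕ) [NeZero n] (f : (Fin n → A) → A) (g : A → A)
    (hA : ∃ x y : A, x ≠ y)
    (h1 : ∀ x : A, f (fun _ => x) = x)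
    (hg1 : ∀ x : A, g^[n] x = x)
    (hg2 : ∀ x : Fin n → A, g (f x) = f (fun k => g (x (k + 1)))) :
    ∀ i : Fin n, ∃ (c : Fin n → A) (a b : A),
      f (Function.update c i a) ≠ f (Function.update c i b) := by
  intro i
  by_contra! hi
  have hg : Injective g := by
    refine Injective.of_comp (f := g^[n - 1]) ?_
    rw [← iterate_succ, Nat.succ_eq_add_one, Nat.sub_one_add_one (NeZero.ne n), funext hg1]
    exact injective_id
  have hall : ∀ j : Fin n, DependsOn f {j}ᶜ :=
    Fin.forall_of_add_one (dependsOn_compl_singleton_iff.2 hi) fun j hj => by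
      simpa [image_compl_eq (AddGroup.addRight_bijective (1 : Fin n))] using
        hj.image_of_apply_eq hg hg2
  obtain ⟨x, y, hxy⟩ := hA
  have hconst := (dependsOn_empty_of_forall_compl_singleton hall).empty
  exact hxy (by rw [← h1 x, ← h1 y]; exact hconst _ _)

/-- An `n`-ary power decomposition operation on a set with at least two elements depends on
each of its coordinates. -/
theorem power_decomposition_depends
    (A : Type) (n : ℕ) [NeZero n] (f : (Fin n → A) → A) (g : A → A)
    (hA : ∃ x y : A, x ≠ y)
    (h1 : ∀ x : A, f (fun _ => x) = x)
    (h2 : ∀ x : Fin n → Fin n → A, f (fun i => f (x i)) = f (fun i => x i i))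
    (hg1 : ∀ x : A, g^[n] x = x)
    (hg2 : ∀ x : Fin n → A, g (f x) = f (fun k => g (x (k + 1)))) :
    ∀ i : Fin n, ∃ (c : Fin n → A) (a b : A),
      f (Function.update c i a) ≠ f (Function.update c i b) :=
  power_decomposition_depends_general A n f g hA h1 hg1 hg2
end
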